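/- Let A be a unital associative algebra over a commutative ring k, let (Γ₁, ∂₁) and (Γ₂, ∂₂) be first-order differential calculi over A, let Γ₀ be an A-bimodule and δ : A → Γ₀ a k-linear map satisfying the Leibniz rule. Suppose φ : Γ₁ ⊕ Γ₀ → Γ₂ ⊕ Γ₀ is an A-bimodule isomorphism with φ ∘ (∂₁ ⊕ δ) = ∂₂ ⊕ δ and φ({0} ⊕ Γ₀) = {0} ⊕ Γ₀. Then φ induces an A-bimodule isomorphism ψ : Γ₁ → Γ₂ with ψ ∘ ∂₁ = ∂₂; that is, the extended calculi being isomorphic (compatibly with the one-dimensional sector) forces the underlying outer calculi (Γ₁, ∂₁) and (Γ₂, ∂₂) to be isomorphic, so the map Δ^Out_In is injective on isomorphism classes. -/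

import Mathlib

/-! Since `φ` maps `{0} ⊕ Γ₀` onto itself, `(φ p).1` depends only on `p.1`, so `φ` descends
to `ψ x := (φ (x, 0)).1`, with inverse `y ↦ (φ⁻¹ (y, 0)).1` by the same argument for `φ⁻¹`.
The actions and differentials on the sums being componentwise, `ψ` inherits bimodule
linearity and `ψ ∘ ∂₁ = ∂₂` from `φ`. -/

open MulOpposite

namespace LinearEquiv

variable {R M₁ M₂ N : Type*} [Semiring R] [AddCommMonoid M₁] [AddCommMonoid M₂]
  [AddCommMonoid N] [Module R M₁] [Module R M₂] [Module R N]
  {φ : (M₁ × N) ≃ₗ[R] (M₂ × N)}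
  (hφ : Submodule.map (φ : (M₁ × N) →ₗ[R] (M₂ × N))
    ((⊥ : Submodule R M₁).prod ⊤) = (⊥ : Submodule R M₂).prod ⊤)
include hφ

theorem symm_map_prod_bot_top :
    Submodule.map (φ.symm : (M₂ × N) →ₗ[R] (M₁ × N)) ((⊥ : Submodule R M₂).prod ⊤) =
      (⊥ : Submodule R M₁).prod ⊤ :=
  (Submodule.map_symm_eq_iff φ).2 hφ

theorem fst_apply_zero_prod (z : N) : (φ (0, z)).1 = 0 := by
  have : φ (0, z) ∈ (⊥ : Submodule R M₂).prod ⊤ :=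
    hφ ▸ Submodule.mem_map_of_mem (p := (⊥ : Submodule R M₁).prod ⊤) ⟨rfl, trivial⟩
  exact this.1

theorem fst_apply_eq_fst_apply_prod_zero (p : M₁ × N) : (φ p).1 = (φ (p.1, 0)).1 := by
  have hp : p = (p.1, 0) + (0, p.2) := by simp
  conv_lhs => rw [hp, map_add, Prod.fst_add, fst_apply_zero_prod hφ, add_zero]

def ofProdBotTop : M₁ ≃ₗ[R] M₂ where
  toFun x := (φ (x, 0)).1
  invFun y := (φ.symm (y, 0)).1
  map_add' x x' := by simp [← Prod.fst_add, ← map_add]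
  map_smul' c x := by simp [← Prod.smul_fst, ← map_smul]
  left_inv x := by
    simp only [← fst_apply_eq_fst_apply_prod_zero (symm_map_prod_bot_top hφ), symm_apply_apply]
  right_inv y := by
    simp only [← fst_apply_eq_fst_apply_prod_zero hφ, apply_symm_apply]

theorem ofProdBotTop_apply (x : M₁) : ofProdBotTop hφ x = (φ (x, 0)).1 := rfl

theorem ofProdBotTop_fst (p : M₁ × N) : ofProdBotTop hφ p.1 = (φ p).1 :=
  (fst_apply_eq_fst_apply_prod_zero hφ p).symm

theorem ofProdBotTop_smul {S : Type*} [SMul S M₁] [SMul S M₂] [SMulZeroClass S N]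
    (hφS : ∀ (s : S) (p : M₁ × N), φ (s • p) = s • φ p) (s : S) (x : M₁) :
    ofProdBotTop hφ (s • x) = s • ofProdBotTop hφ x := by
  have : ((s • x, 0) : M₁ × N) = s • (x, 0) := by simp [Prod.smul_mk]
  rw [ofProdBotTop_apply, ofProdBotTop_apply, this, hφS, Prod.smul_fst]

end LinearEquiv

theorem out_in_injective (k A Γ₁ Γ₂ Γ₀ : Type*)
    [CommRing k] [Ring A] [Algebra k A]
    [AddCommGroup Γ₁] [Module k Γ₁] [Module A Γ₁] [Module Aᵐᵒᵖ Γ₁]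
    [AddCommGroup Γ₂] [Module k Γ₂] [Module A Γ₂] [Module Aᵐᵒᵖ Γ₂]
    [AddCommGroup Γ₀] [Module k Γ₀] [Module A Γ₀] [Module Aᵐᵒᵖ Γ₀]
    (der₁ : A →ₗ[k] Γ₁) (der₂ : A →ₗ[k] Γ₂) (δ : A →ₗ[k] Γ₀)
    (φ : (Γ₁ × Γ₀) ≃ₗ[k] (Γ₂ × Γ₀))
    (hφL : ∀ (a : A) (p : Γ₁ × Γ₀), φ (a • p) = a • φ p)
    (hφR : ∀ (a : A) (p : Γ₁ × Γ₀), φ (op a • p) = op a • φ p)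
    (hφD : ∀ a : A, φ ((der₁.prod δ) a) = (der₂.prod δ) a)
    (hφ₀ : Submodule.map (φ : (Γ₁ × Γ₀) →ₗ[k] (Γ₂ × Γ₀))
        ((⊥ : Submodule k Γ₁).prod (⊤ : Submodule k Γ₀)) =
      (⊥ : Submodule k Γ₂).prod (⊤ : Submodule k Γ₀)) :
    ∃ ψ : Γ₁ ≃ₗ[k] Γ₂,
      (∀ (a : A) (x : Γ₁), ψ (a • x) = a • ψ x) ∧
      (∀ (a : A) (x : Γ₁), ψ (op a • x) = op a • ψ x) ∧
      (∀ a : A, ψ (der₁ a) = der₂ a) := by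
  refine ⟨LinearEquiv.ofProdBotTop hφ₀, LinearEquiv.ofProdBotTop_smul hφ₀ hφL,
    fun a => LinearEquiv.ofProdBotTop_smul hφ₀ (fun b => hφR b.unop) (op a),
    fun a => (LinearEquiv.ofProdBotTop_fst hφ₀ ((der₁.prod δ) a)).trans
      (congrArg Prod.fst (hφD a))⟩
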